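/- Fix a real λ > 0 and set x̄ = f_3(λ)(λf_1(λ) − 2f_2(λ))/(λ·f_2(λ)²). Then for every real x ≥ 0, F(x,λ) ≤ F(x̄,λ), and F(x̄,λ) = λ⁴f_0(λ) / ( 4 f_2(λ) (λf_1(λ) − f_2(λ)) ). -/

import Mathlib

/-- `f k x = e^x - ∑_{i=0}^{k-1} x^i / i!`. -/
noncomputable def f (k : ℕ) (x : ℝ) : ℝ :=
  Real.exp x - ∑ i ∈ Finset.range k, x ^ i / (Nat.factorial i : ℝ)

/-- The function `F(x, λ)` from the paper. -/
noncomputable def F (x lam : ℝ) : ℝ :=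
  (x * lam ^ 5 * f 0 lam / (f 2 lam * f 3 lam) + lam ^ 4 * f 0 lam / (f 2 lam) ^ 2) /
    (x * lam * f 2 lam / f 3 lam + lam * f 1 lam / f 2 lam) ^ 2

/-- The maximizer `x̄ = f₃(λ)(λf₁(λ) - 2f₂(λ))/(λ f₂(λ)²)`. -/
noncomputable def xbar (lam : ℝ) : ℝ :=
  f 3 lam * (lam * f 1 lam - 2 * f 2 lam) / (lam * (f 2 lam) ^ 2)

lemma abstract_max (A B C D : ℝ) (hA : 0 < A) (hC : 0 < C) (hD : 0 < D)
    (h : 0 < A * D - B * C) :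
    (∀ x : ℝ, 0 ≤ x → (x * A + B) / (x * C + D) ^ 2 ≤ A ^ 2 / (4 * C * (A * D - B * C))) ∧
      ((A * D - 2 * B * C) / (A * C) * A + B) / ((A * D - 2 * B * C) / (A * C) * C + D) ^ 2
        = A ^ 2 / (4 * C * (A * D - B * C)) := by
  constructor
  · intro x hx
    have hden : 0 < x * C + D := by positivity
    rw [div_le_div_iff₀ (by positivity) (by positivity)]
    nlinarith [sq_nonneg (A * (x * C + D) - 2 * C * (x * A + B)), sq_nonneg (x*C+D)]
  · have h1 : (A * D - 2 * B * C) / (A * C) * C + D = 2 * (A * D - B * C) / A := by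
      field_simp; ring
    have h2 : (A * D - 2 * B * C) / (A * C) * A + B = (A * D - B * C) / C := by
      field_simp; ring
    rw [h1, h2]
    rw [div_eq_div_iff (by positivity) (by positivity)]
    field_simp
    ring

lemma f0_eq (lam : ℝ) : f 0 lam = Real.exp lam := by simp [f]
lemma f1_eq (lam : ℝ) : f 1 lam = Real.exp lam - 1 := by
  simp [f, Finset.sum_range_succ]
lemma f2_eq (lam : ℝ) : f 2 lam = Real.exp lam - 1 - lam := by
  simp [f, Finset.sum_range_succ]; ring
lemma f3_eq (lam : ℝ) : f 3 lam = Real.exp lam - 1 - lam - lam ^ 2 / 2 := by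
  simp [f, Finset.sum_range_succ, Nat.factorial]; ring

lemma f2_pos (lam : ℝ) (hlam : 0 < lam) : 0 < f 2 lam := by
  rw [f2_eq]
  have := Real.add_one_lt_exp hlam.ne'
  linarith

lemma f3_pos (lam : ℝ) (hlam : 0 < lam) : 0 < f 3 lam := by
  rw [f3_eq]
  have h := Real.sum_le_exp_of_nonneg hlam.le 4
  have : (1:ℝ) + lam + lam ^ 2 / 2 + lam ^ 3 / 6 ≤ Real.exp lam := by
    convert h using 1
    norm_num [Finset.sum_range_succ, Nat.factorial]
  nlinarith [pow_pos hlam 3]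

lemma mu_pos (lam : ℝ) (hlam : 0 < lam) : 0 < lam * f 1 lam - f 2 lam := by
  rw [f1_eq, f2_eq]
  have h : 1 - lam < Real.exp (-lam) := by
    have := Real.add_one_lt_exp (x := -lam) (by linarith)
    linarith
  have he : Real.exp (-lam) = (Real.exp lam)⁻¹ := Real.exp_neg lam
  have hep : 0 < Real.exp lam := Real.exp_pos lam
  rw [he] at h
  have := (mul_lt_mul_of_pos_right h hep)
  rw [inv_mul_cancel₀ hep.ne'] at this
  nlinarith

/-- For `λ > 0`, `F(·, λ)` attains its maximum over `x ≥ 0` at `x̄`, and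
`F(x̄, λ) = λ⁴ f₀(λ) / (4 f₂(λ)(λ f₁(λ) - f₂(λ)))`. -/
theorem F_le_F_xbar (lam : ℝ) (hlam : 0 < lam) :
    (∀ x : ℝ, 0 ≤ x → F x lam ≤ F (xbar lam) lam) ∧
      F (xbar lam) lam = lam ^ 4 * f 0 lam / (4 * f 2 lam * (lam * f 1 lam - f 2 lam)) := by
  have h0 : 0 < f 0 lam := by rw [f0_eq]; exact Real.exp_pos lam
  have h2 : 0 < f 2 lam := f2_pos lam hlam
  have h3 : 0 < f 3 lam := f3_pos lam hlam
  have hmu : 0 < lam * f 1 lam - f 2 lam := mu_pos lam hlam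
  set A : ℝ := lam ^ 5 * f 0 lam / (f 2 lam * f 3 lam) with hA_def
  set B : ℝ := lam ^ 4 * f 0 lam / (f 2 lam) ^ 2 with hB_def
  set C : ℝ := lam * f 2 lam / f 3 lam with hC_def
  set D : ℝ := lam * f 1 lam / f 2 lam with hD_def
  have hA : 0 < A := by positivity
  have hC : 0 < C := by positivity
  have h1 : 0 < f 1 lam := by nlinarith
  have hD : 0 < D := by positivity
  have hdisc : 0 < A * D - B * C := by
    have : A * D - B * C = lam ^ 5 * f 0 lam * (lam * f 1 lam - f 2 lam)
        / ((f 2 lam) ^ 2 * f 3 lam) := by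
      rw [hA_def, hB_def, hC_def, hD_def]; field_simp
    rw [this]; positivity
  have hFform : ∀ x : ℝ, F x lam = (x * A + B) / (x * C + D) ^ 2 := by
    intro x
    rw [F, hA_def, hB_def, hC_def, hD_def]
    ring_nf
  have hxbar : xbar lam = (A * D - 2 * B * C) / (A * C) := by
    rw [xbar, hA_def, hB_def, hC_def, hD_def]
    rw [div_eq_div_iff (by positivity) (by positivity)]
    field_simp
  have hval : A ^ 2 / (4 * C * (A * D - B * C))
      = lam ^ 4 * f 0 lam / (4 * f 2 lam * (lam * f 1 lam - f 2 lam)) := by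
    have hd : A * D - B * C = lam ^ 5 * f 0 lam * (lam * f 1 lam - f 2 lam)
        / ((f 2 lam) ^ 2 * f 3 lam) := by
      rw [hA_def, hB_def, hC_def, hD_def]; field_simp
    rw [hd, hA_def, hC_def]
    rw [div_eq_div_iff (by positivity) (by positivity)]
    field_simp
  obtain ⟨hle, heq⟩ := abstract_max A B C D hA hC hD hdisc
  have hFx : F (xbar lam) lam = lam ^ 4 * f 0 lam / (4 * f 2 lam * (lam * f 1 lam - f 2 lam)) := by
    rw [hFform, hxbar, heq, hval]
  refine ⟨fun x hx => ?_, hFx⟩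
  rw [hFx, hFform]
  rw [← hval]
  exact hle x hx
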